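/- arXiv:2010.11236 — 2 statements merged into one kernel-verified Lean document; each statement's English description precedes it below -/
import Mathlib

section
/- For fixed j with 1 ≤ j < n, the number of ways to partition [n] into n−j nonempty parts each consisting of consecutive integers, together with a bijective labeling of [n] by [n] such that the labels within each part are in strictly decreasing order along the part, equals (n−j)! · S(n, n−j), the number of surjections from [n] onto [n−j]. -/
/-- A permutation of `[N] = {1,…,N}`, encoded as a function `ℕ → ℕ` that is a
bijection of `{1,…,N}` onto itself and is the identity elsewhere. -/
def PermOn (N : ℕ) (π : ℕ → ℕ) : Prop :=
  Set.BijOn π (Set.Icc 1 N) (Set.Icc 1 N) ∧ ∀ i, i ∉ Set.Icc 1 N → π i = i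

/-- The excedance set of a permutation of `[N]`: positions `i ∈ [N]` with `π i > i`. -/
def ExcSet (N : ℕ) (π : ℕ → ℕ) : Set ℕ := {i | i ∈ Set.Icc 1 N ∧ i < π i}

/-- Stirling numbers of the second kind. -/
def stirling : ℕ → ℕ → ℕ
  | 0, 0 => 1
  | 0, _ + 1 => 0
  | _ + 1, 0 => 0
  | n + 1, k + 1 => (k + 1) * stirling n (k + 1) + stirling n k

/-- Uniqueness of strictly decreasing maps with equal images. -/
theorem anti_unique (s : Finset ℕ) (φ ψ : ℕ → ℕ)
    (hφ : ∀ i ∈ s, ∀ i' ∈ s, i < i' → φ i' < φ i)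
    (hψ : ∀ i ∈ s, ∀ i' ∈ s, i < i' → ψ i' < ψ i)
    (him : s.image φ = s.image ψ) : ∀ i ∈ s, φ i = ψ i := by
  induction s using Finset.strongInduction with
  | _ s ih =>
    rcases s.eq_empty_or_nonempty with rfl | hne
    · simp
    · set a := s.min' hne with ha
      have haeq : φ a = ψ a := by
        have h1 : ∀ (χ ρ : ℕ → ℕ), (∀ i ∈ s, ∀ i' ∈ s, i < i' → ρ i' < ρ i) →
            s.image χ = s.image ρ → χ a ≤ ρ a := by
          intro χ ρ hρ himm
          have : χ a ∈ s.image ρ := himm ▸ Finset.mem_image_of_mem χ (s.min'_mem hne)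
          obtain ⟨x, hx, hxa⟩ := Finset.mem_image.1 this
          rw [← hxa]
          rcases eq_or_lt_of_le (s.min'_le x hx) with h | h
          · rw [← h]
          · exact le_of_lt (hρ a (s.min'_mem hne) x hx h)
        exact le_antisymm (h1 φ ψ hψ him) (h1 ψ φ hφ him.symm)
      intro i hi
      rcases eq_or_ne i a with rfl | hia
      · exact haeq
      · have hsub : s.erase a ⊂ s := Finset.erase_ssubset (s.min'_mem hne)
        have im : ∀ (χ : ℕ → ℕ), (∀ i ∈ s, ∀ i' ∈ s, i < i' → χ i' < χ i) →
            (s.erase a).image χ = (s.image χ).erase (χ a) := by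
          intro χ hχ
          ext b
          simp only [Finset.mem_image, Finset.mem_erase]
          constructor
          · rintro ⟨x, ⟨hxa, hx⟩, rfl⟩
            have hax : a < x := lt_of_le_of_ne (s.min'_le x hx) (Ne.symm hxa)
            exact ⟨(hχ a (s.min'_mem hne) x hx hax).ne, x, hx, rfl⟩
          · rintro ⟨hba, x, hx, rfl⟩
            exact ⟨x, ⟨fun h => hba (by rw [h]), hx⟩, rfl⟩
        refine ih (s.erase a) hsub
          (fun x hx x' hx' h => hφ x (Finset.mem_of_mem_erase hx) x' (Finset.mem_of_mem_erase hx') h)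
          (fun x hx x' hx' h => hψ x (Finset.mem_of_mem_erase hx) x' (Finset.mem_of_mem_erase hx') h)
          ?_ i (Finset.mem_erase.2 ⟨hia, hi⟩)
        rw [im φ hφ, im ψ hψ, him, haeq]

/-- Level sets of a monotone map on `Icc 1 n` are initial segments. -/
theorem mono_levels (n : ℕ) (f : ℕ → ℕ) (hf : MonotoneOn f (Set.Icc 1 n)) (v : ℕ) :
    ∀ i ∈ Finset.Icc 1 n,
      (f i ≤ v ↔ i ≤ ((Finset.Icc 1 n).filter (fun i => f i ≤ v)).card) := by
  set s := (Finset.Icc 1 n).filter (fun i => f i ≤ v) with hs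
  rcases s.eq_empty_or_nonempty with he | hne
  · intro i hi
    constructor
    · intro h
      exfalso
      have : i ∈ s := Finset.mem_filter.2 ⟨hi, h⟩
      rw [he] at this; simp at this
    · intro h
      rw [he] at h
      simp only [Finset.card_empty, Nat.le_zero] at h
      have := (Finset.mem_Icc.1 hi).1; omega
  · set M := s.max' hne with hM
    have hMs : M ∈ s := s.max'_mem hne
    have hMn : M ∈ Finset.Icc 1 n := (Finset.mem_filter.1 hMs).1
    have hseq : s = Finset.Icc 1 M := by
      ext x
      constructor
      · intro hx
        have h1 := (Finset.mem_Icc.1 (Finset.mem_filter.1 hx).1).1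
        exact Finset.mem_Icc.2 ⟨h1, Finset.le_max' _ _ hx⟩
      · intro hx
        have hx1 := (Finset.mem_Icc.1 hx).1
        have hxM := (Finset.mem_Icc.1 hx).2
        have hMn' := Finset.mem_Icc.1 hMn
        have hxI : x ∈ Finset.Icc 1 n := Finset.mem_Icc.2 ⟨hx1, le_trans hxM hMn'.2⟩
        refine Finset.mem_filter.2 ⟨hxI, ?_⟩
        exact le_trans
          (hf (Set.mem_Icc.2 ⟨hx1, le_trans hxM hMn'.2⟩) (Set.mem_Icc.2 ⟨hMn'.1, hMn'.2⟩) hxM)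
          (Finset.mem_filter.1 hMs).2
    have hcard : s.card = M := by
      rw [hseq, Nat.card_Icc]
      have := (Finset.mem_Icc.1 hMn).1; omega
    intro i hi
    rw [hcard]
    constructor
    · intro h
      have his : i ∈ s := Finset.mem_filter.2 ⟨hi, h⟩
      exact Finset.le_max' _ _ his
    · intro h
      have : i ∈ s := by
        rw [hseq]; exact Finset.mem_Icc.2 ⟨(Finset.mem_Icc.1 hi).1, h⟩
      exact (Finset.mem_filter.1 this).2

theorem orderIsoOfFin_val_congr {s t : Finset ℕ} (hst : s = t) {a b : ℕ} (hab : a = b)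
    (ha : a < s.card) (hb : b < t.card) :
    (s.orderIsoOfFin rfl ⟨a, ha⟩ : ℕ) = (t.orderIsoOfFin rfl ⟨b, hb⟩ : ℕ) := by
  subst hst; subst hab; rfl

theorem construct (n k : ℕ) (g : ℕ → ℕ)
    (hmap : ∀ i, 1 ≤ i → i ≤ n → 1 ≤ g i ∧ g i ≤ k)
    (hsur : ∀ v, 1 ≤ v → v ≤ k → ∃ i, 1 ≤ i ∧ i ≤ n ∧ g i = v) :
    ∃ f ℓ : ℕ → ℕ,
      (∀ i, 1 ≤ i → i ≤ n → 1 ≤ f i ∧ f i ≤ k) ∧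
      (∀ v, 1 ≤ v → v ≤ k → ∃ i, 1 ≤ i ∧ i ≤ n ∧ f i = v) ∧
      MonotoneOn f (Set.Icc 1 n) ∧
      (∀ i, ¬(1 ≤ i ∧ i ≤ n) → f i = 0) ∧
      Set.BijOn ℓ (Set.Icc 1 n) (Set.Icc 1 n) ∧
      (∀ i, ¬(1 ≤ i ∧ i ≤ n) → ℓ i = i) ∧
      (∀ i i', 1 ≤ i → i ≤ n → 1 ≤ i' → i' ≤ n → i < i' → f i = f i' → ℓ i' < ℓ i) ∧
      (∀ i, 1 ≤ i → i ≤ n → g (ℓ i) = f i) := by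
  classical
  set A : ℕ → ℕ := fun v => ((Finset.Icc 1 n).filter (fun i => g i ≤ v)).card with hA
  have hA0 : A 0 = 0 := by
    rw [hA]
    simp only [Finset.card_eq_zero, Finset.filter_eq_empty_iff]
    intro i hi
    have := hmap i (Finset.mem_Icc.1 hi).1 (Finset.mem_Icc.1 hi).2
    omega
  have hAmono : ∀ u v, u ≤ v → A u ≤ A v := by
    intro u v huv
    apply Finset.card_le_card
    intro x hx
    exact Finset.mem_filter.2 ⟨(Finset.mem_filter.1 hx).1, le_trans (Finset.mem_filter.1 hx).2 huv⟩
  have hAk : A k = n := by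
    rw [hA]
    simp only
    rw [Finset.filter_true_of_mem, Nat.card_Icc]
    · omega
    · intro i hi
      exact (hmap i (Finset.mem_Icc.1 hi).1 (Finset.mem_Icc.1 hi).2).2
  have hAn : ∀ v, A v ≤ n := by
    intro v
    calc A v ≤ (Finset.Icc 1 n).card := Finset.card_filter_le _ _
    _ = n := by rw [Nat.card_Icc]; omega
  -- fibers
  set Fv : ℕ → Finset ℕ := fun v => (Finset.Icc 1 n).filter (fun i => g i = v) with hFv
  have hcv : ∀ v, 1 ≤ v → A (v-1) + (Fv v).card = A v := by
    intro v hv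
    rw [hA, hFv]
    simp only
    rw [← Finset.card_union_of_disjoint]
    · congr 1
      ext x
      simp only [Finset.mem_union, Finset.mem_filter, Finset.mem_Icc]
      constructor
      · rintro (⟨h1, h2⟩ | ⟨h1, h2⟩)
        · exact ⟨h1, by omega⟩
        · exact ⟨h1, by omega⟩
      · rintro ⟨h1, h2⟩
        by_cases hx : g x = v
        · exact Or.inr ⟨h1, hx⟩
        · exact Or.inl ⟨h1, by omega⟩
    · rw [Finset.disjoint_filter]
      intro x _ hx1 hx2
      omega
  have hFvne : ∀ v, 1 ≤ v → v ≤ k → 1 ≤ (Fv v).card := by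
    intro v h1 h2
    obtain ⟨i, hi1, hi2, hgi⟩ := hsur v h1 h2
    have : i ∈ Fv v := Finset.mem_filter.2 ⟨Finset.mem_Icc.2 ⟨hi1, hi2⟩, hgi⟩
    exact Finset.card_pos.2 ⟨i, this⟩
  -- the part-assignment function
  set F : ℕ → ℕ := fun i => sInf {v | i ≤ A v} with hF
  have hFne : ∀ i, i ≤ n → ({v | i ≤ A v}).Nonempty := fun i hi => ⟨k, by simp [hAk, hi]⟩
  have hFmem : ∀ i, i ≤ n → i ≤ A (F i) := fun i hi => Nat.sInf_mem (hFne i hi)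
  have hFle : ∀ i v, i ≤ A v → F i ≤ v := fun i v h => Nat.sInf_le h
  have hFlt : ∀ i v, v < F i → A v < i := by
    intro i v h
    by_contra hc
    push_neg at hc
    exact absurd (hFle i v hc) (by omega)
  have hF1 : ∀ i, 1 ≤ i → i ≤ n → 1 ≤ F i ∧ F i ≤ k := by
    intro i h1 h2
    constructor
    · rcases Nat.eq_zero_or_pos (F i) with h | h
      · have := hFmem i h2
        rw [h, hA0] at this
        omega
      · exact h
    · exact hFle i k (by rw [hAk]; exact h2)
  have hFiv : ∀ i, 1 ≤ i → i ≤ n → A (F i - 1) < i ∧ i ≤ A (F i) := by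
    intro i h1 h2
    refine ⟨hFlt i (F i - 1) ?_, hFmem i h2⟩
    have := (hF1 i h1 h2).1
    omega
  have hfiber : ∀ i v, 1 ≤ i → i ≤ n → 1 ≤ v → A (v-1) < i → i ≤ A v → F i = v := by
    intro i v h1 h2 hv hlt hle
    have hle' : F i ≤ v := hFle i v hle
    by_contra hne
    have hlt' : F i ≤ v - 1 := by omega
    have := hFmem i h2
    have := hAmono (F i) (v-1) hlt'
    omega
  -- the labeling
  have idxpf : ∀ i, 1 ≤ i → i ≤ n → A (F i) - i < (Fv (F i)).card := by
    intro i h1 h2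
    have h3 := hFiv i h1 h2
    have h4 := hcv (F i) (hF1 i h1 h2).1
    omega
  set L : ℕ → ℕ := fun i =>
    if h : 1 ≤ i ∧ i ≤ n then
      ((Fv (F i)).orderIsoOfFin rfl ⟨A (F i) - i, idxpf i h.1 h.2⟩ : ℕ)
    else i with hL
  have hLmem : ∀ i, 1 ≤ i → i ≤ n → L i ∈ Fv (F i) := by
    intro i h1 h2
    rw [hL]
    simp only [dif_pos (And.intro h1 h2)]
    exact ((Fv (F i)).orderIsoOfFin rfl _).2
  have hLIcc : ∀ i, 1 ≤ i → i ≤ n → 1 ≤ L i ∧ L i ≤ n := by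
    intro i h1 h2
    have := (Finset.mem_Icc.1 (Finset.mem_filter.1 (hLmem i h1 h2)).1)
    exact this
  have hgL : ∀ i, 1 ≤ i → i ≤ n → g (L i) = F i := by
    intro i h1 h2
    exact (Finset.mem_filter.1 (hLmem i h1 h2)).2
  -- final assembly
  refine ⟨fun i => if 1 ≤ i ∧ i ≤ n then F i else 0, L, ?_, ?_, ?_, ?_, ?_, ?_, ?_, ?_⟩
  · intro i h1 h2
    simp only [if_pos (show 1 ≤ i ∧ i ≤ n from ⟨h1, h2⟩)]
    exact hF1 i h1 h2
  · intro v h1 h2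
    refine ⟨A v, ?_, hAn v, ?_⟩
    · have := hcv v h1
      have := hFvne v h1 h2
      have := hAmono 0 (v-1) (by omega)
      rw [hA0] at this
      omega
    · have hAv1 : 1 ≤ A v := by
        have := hcv v h1
        have := hFvne v h1 h2
        omega
      simp only [if_pos (show 1 ≤ A v ∧ A v ≤ n from ⟨hAv1, hAn v⟩)]
      apply hfiber (A v) v hAv1 (hAn v) h1 _ (le_refl _)
      have := hcv v h1
      have := hFvne v h1 h2
      omega
  · intro x hx y hy hxy
    simp only [Set.mem_Icc] at hx hy
    simp only [if_pos (show 1 ≤ x ∧ x ≤ n from ⟨hx.1, hx.2⟩),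
      if_pos (show 1 ≤ y ∧ y ≤ n from ⟨hy.1, hy.2⟩)]
    exact hFle x (F y) (le_trans hxy (hFmem y hy.2))
  · intro i hi
    simp only [if_neg hi]
  · -- BijOn of L
    constructor
    · intro i hi
      simp only [Set.mem_Icc] at hi ⊢
      exact hLIcc i hi.1 hi.2
    constructor
    · -- InjOn
      intro x hx y hy hxy
      simp only [Set.mem_Icc] at hx hy
      have hfx := hgL x hx.1 hx.2
      have hfy := hgL y hy.1 hy.2
      have hFeq : F x = F y := by rw [← hfx, ← hfy, hxy]
      rw [hL] at hxy
      simp only [dif_pos (And.intro hx.1 hx.2), dif_pos (And.intro hy.1 hy.2)] at hxy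
      have pfy : A (F x) - y < (Fv (F x)).card := by
        rw [hFeq]; exact idxpf y hy.1 hy.2
      have h5 : ((Fv (F x)).orderIsoOfFin rfl ⟨A (F x) - x, idxpf x hx.1 hx.2⟩ : ℕ) =
          ((Fv (F x)).orderIsoOfFin rfl ⟨A (F x) - y, pfy⟩ : ℕ) :=
        hxy.trans (orderIsoOfFin_val_congr (congrArg Fv hFeq.symm) (by rw [hFeq]) _ _)
      have := ((Fv (F x)).orderIsoOfFin rfl).injective (Subtype.ext h5)
      have h2 : A (F x) - x = A (F x) - y := congrArg Fin.val this
      have h3 := (hFiv x hx.1 hx.2).2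
      have h4 := (hFiv y hy.1 hy.2).2
      rw [← hFeq] at h4
      omega
    · -- SurjOn
      intro x hx
      simp only [Set.mem_Icc] at hx
      set v := g x with hv
      have hvk := hmap x hx.1 hx.2
      have hxFv : x ∈ Fv v := Finset.mem_filter.2 ⟨Finset.mem_Icc.2 ⟨hx.1, hx.2⟩, rfl⟩
      set idx := ((Fv v).orderIsoOfFin rfl).symm ⟨x, hxFv⟩ with hidx
      set i := A v - idx.1 with hi
      have hicc : A (v-1) < i ∧ i ≤ A v := by
        have h4 := hcv v hvk.1
        have := idx.2
        omega
      have hiIcc : 1 ≤ i ∧ i ≤ n := by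
        have := hAmono 0 (v-1) (by omega)
        rw [hA0] at this
        have := hAn v
        omega
      have hFi : F i = v := hfiber i v hiIcc.1 hiIcc.2 hvk.1 hicc.1 hicc.2
      refine ⟨i, Set.mem_Icc.2 hiIcc, ?_⟩
      rw [hL]
      simp only [dif_pos hiIcc]
      have harith : A (F i) - i = idx.1 := by
        have := idx.2
        have := hcv v hvk.1
        rw [hFi, hi]
        omega
      refine (orderIsoOfFin_val_congr (congrArg Fv hFi) harith _ idx.2).trans ?_
      exact congrArg Subtype.val (((Fv v).orderIsoOfFin rfl).apply_symm_apply ⟨x, hxFv⟩)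
  · intro i hi
    rw [hL]
    exact dif_neg hi
  · -- strictly decreasing on parts
    intro x y h1 h2 h3 h4 hxy hfeq
    simp only [if_pos (show 1 ≤ x ∧ x ≤ n from ⟨h1, h2⟩),
      if_pos (show 1 ≤ y ∧ y ≤ n from ⟨h3, h4⟩)] at hfeq
    rw [hL]
    simp only [dif_pos (And.intro h1 h2), dif_pos (And.intro h3 h4)]
    have pfy : A (F x) - y < (Fv (F x)).card := by
      rw [hfeq]; exact idxpf y h3 h4
    have hrw : ((Fv (F y)).orderIsoOfFin rfl ⟨A (F y) - y, idxpf y h3 h4⟩ : ℕ) =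
        ((Fv (F x)).orderIsoOfFin rfl ⟨A (F x) - y, pfy⟩ : ℕ) :=
      orderIsoOfFin_val_congr (congrArg Fv hfeq.symm) (by rw [hfeq]) _ _
    rw [hrw]
    have hlt : (⟨A (F x) - y, pfy⟩ : Fin (Fv (F x)).card) <
        ⟨A (F x) - x, idxpf x h1 h2⟩ := by
      have hy2 := (hFiv y h3 h4).2
      have hx1 := (hFiv x h1 h2).1
      rw [← hfeq] at hy2
      exact Fin.mk_lt_mk.2 (by omega)
    exact Subtype.coe_lt_coe.2 (((Fv (F x)).orderIsoOfFin rfl).strictMono hlt)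
  · intro i h1 h2
    simp only [if_pos (show 1 ≤ i ∧ i ≤ n from ⟨h1, h2⟩)]
    exact hgL i h1 h2

open Function Fin

def surjSnoc (n k : ℕ)
    (x : Σ _a : Fin k, ({h : Fin n → Fin k // Surjective h} ⊕
        {h : Fin n → Fin k // Set.range h = {_a}ᶜ})) :
    {g : Fin (n+1) → Fin k // Surjective g} :=
  ⟨Fin.snoc (Sum.elim Subtype.val Subtype.val x.2) x.1, by
    obtain ⟨a, s⟩ := x
    cases s with
    | inl h =>
      intro b
      obtain ⟨y, hy⟩ := h.2 b
      exact ⟨y.castSucc, by simp [hy]⟩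
    | inr h =>
      intro b
      by_cases hb : b = a
      · exact ⟨Fin.last n, by simp [hb]⟩
      · have : b ∈ Set.range h.1 := by rw [h.2]; simpa using hb
        obtain ⟨y, hy⟩ := this
        exact ⟨y.castSucc, by simp [hy]⟩⟩

theorem surjSnoc_bij (n k : ℕ) : Function.Bijective (surjSnoc n k) := by
  constructor
  · rintro ⟨a1, s1⟩ ⟨a2, s2⟩ hEq
    have hEq' := congrArg Subtype.val hEq
    simp only [surjSnoc] at hEq'
    have ha : a1 = a2 := by
      have := congrFun hEq' (Fin.last n); simpa using this
    subst ha
    have hh : ∀ i : Fin n, (Sum.elim Subtype.val Subtype.val s1 : Fin n → Fin (k)) i =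
        (Sum.elim Subtype.val Subtype.val s2 : Fin n → Fin (k)) i := fun i => by
      simpa using congrFun hEq' i.castSucc
    have hh : (Sum.elim Subtype.val Subtype.val s1 : Fin n → Fin (k)) =
        (Sum.elim Subtype.val Subtype.val s2 : Fin n → Fin (k)) := funext hh
    congr 1
    cases s1 with
    | inl h1 =>
      cases s2 with
      | inl h2 => simp only [Sum.elim_inl] at hh; exact congrArg _ (Subtype.ext hh)
      | inr h2 =>
        exfalso
        simp only [Sum.elim_inl, Sum.elim_inr] at hh
        have : a1 ∈ Set.range h2.1 := hh ▸ h1.2 a1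
        rw [h2.2] at this; simp at this
    | inr h1 =>
      cases s2 with
      | inl h2 =>
        exfalso
        simp only [Sum.elim_inl, Sum.elim_inr] at hh
        have : a1 ∈ Set.range h1.1 := hh ▸ h2.2 a1
        rw [h1.2] at this; simp at this
      | inr h2 => simp only [Sum.elim_inr] at hh; exact congrArg _ (Subtype.ext hh)
  · rintro ⟨g, hg⟩
    by_cases hs : Surjective (fun i : Fin n => g i.castSucc)
    · refine ⟨⟨g (Fin.last n), Sum.inl ⟨_, hs⟩⟩, Subtype.ext ?_⟩
      simp only [surjSnoc, Sum.elim_inl]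
      exact Fin.snoc_init_self g
    · refine ⟨⟨g (Fin.last n), Sum.inr ⟨fun i => g i.castSucc, ?_⟩⟩, Subtype.ext ?_⟩
      · ext b
        simp only [Set.mem_range, Set.mem_compl_iff, Set.mem_singleton_iff]
        constructor
        · rintro ⟨x, rfl⟩ hb
          refine hs fun c => ?_
          obtain ⟨y, hy⟩ := hg c
          rcases Fin.eq_castSucc_or_eq_last y with ⟨y', rfl⟩ | rfl
          · exact ⟨y', hy⟩
          · exact ⟨x, hb.trans hy⟩
        · intro hb
          obtain ⟨y, hy⟩ := hg b
          rcases Fin.eq_castSucc_or_eq_last y with ⟨y', rfl⟩ | rfl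
          · exact ⟨y', hy⟩
          · exact absurd hy.symm hb
      · simp only [surjSnoc, Sum.elim_inr]
        exact Fin.snoc_init_self g

theorem card_sigma_fintype {ι : Type*} [Fintype ι] (F : ι → Type*) [∀ i, Finite (F i)] :
    Nat.card (Σ i, F i) = ∑ i, Nat.card (F i) := by
  classical
  letI : ∀ i, Fintype (F i) := fun i => Fintype.ofFinite _
  simp [Nat.card_eq_fintype_card]

theorem card_surj (n k : ℕ) :
    Nat.card {g : Fin n → Fin k // Surjective g} = k.factorial * stirling n k := by
  induction n generalizing k with
  | zero =>
    cases k with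
    | zero =>
      rw [Nat.card_eq_one_iff_unique.2 ⟨⟨fun a b => by
        apply Subtype.ext; funext i; exact absurd i.2 (by omega)⟩,
        ⟨⟨finZeroElim, fun b => absurd b.2 (by omega)⟩⟩⟩]
      simp [stirling]
    | succ k =>
      have : IsEmpty {g : Fin 0 → Fin (k+1) // Surjective g} := by
        constructor; rintro ⟨g, hg⟩
        obtain ⟨y, -⟩ := hg 0
        exact absurd y.2 (by omega)
      rw [Nat.card_of_isEmpty]
      simp [stirling]
  | succ n ih =>
    cases k with
    | zero =>
      have : IsEmpty {g : Fin (n+1) → Fin 0 // Surjective g} := by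
        constructor; rintro ⟨g, hg⟩
        exact absurd (g 0).2 (by omega)
      rw [Nat.card_of_isEmpty]
      simp [stirling]
    | succ k =>
      rw [← Nat.card_congr (Equiv.ofBijective _ (surjSnoc_bij n (k+1)))]
      have missEq : ∀ a : Fin (k+1),
          Nat.card {h : Fin n → Fin (k+1) // Set.range h = {a}ᶜ} =
            Nat.card {h : Fin n → Fin k // Surjective h} := by
        intro a
        have e1 : {h : Fin n → Fin (k+1) // Set.range h = {a}ᶜ} ≃
            {h : Fin n → {x : Fin (k+1) // x ≠ a} // Surjective h} := by
          refine ⟨fun h => ⟨fun i => ⟨h.1 i, ?_⟩, ?_⟩, fun h => ⟨fun i => (h.1 i).1, ?_⟩, ?_, ?_⟩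
          · have : h.1 i ∈ Set.range h.1 := ⟨i, rfl⟩
            rw [h.2] at this; simpa using this
          · rintro ⟨b, hb⟩
            have : b ∈ Set.range h.1 := by rw [h.2]; simpa using hb
            obtain ⟨i, hi⟩ := this
            exact ⟨i, Subtype.ext hi⟩
          · ext b
            simp only [Set.mem_range, Set.mem_compl_iff, Set.mem_singleton_iff]
            constructor
            · rintro ⟨i, rfl⟩; exact (h.1 i).2
            · intro hb; obtain ⟨i, hi⟩ := h.2 ⟨b, hb⟩
              exact ⟨i, congrArg Subtype.val hi⟩
          · intro h; apply Subtype.ext; rfl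
          · intro h; apply Subtype.ext; funext i; rfl
        have e2 : {x : Fin (k+1) // x ≠ a} ≃ Fin k := (finSuccAboveEquiv a).symm
        have e3 : {h : Fin n → {x : Fin (k+1) // x ≠ a} // Surjective h} ≃
            {h : Fin n → Fin k // Surjective h} := by
          refine (Equiv.subtypeEquiv (Equiv.arrowCongr (Equiv.refl _) e2) ?_)
          intro h
          constructor
          · intro hs; exact e2.surjective.comp hs
          · intro hs i
            obtain ⟨x, hx⟩ := hs (e2 i)
            exact ⟨x, by simpa [Equiv.arrowCongr] using congrArg e2.symm hx⟩
        rw [Nat.card_congr (e1.trans e3)]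
      rw [card_sigma_fintype]
      have key : ∀ a : Fin (k+1),
          Nat.card ({h : Fin n → Fin (k+1) // Surjective h} ⊕
            {h : Fin n → Fin (k+1) // Set.range h = {a}ᶜ}) =
          (k+1).factorial * stirling n (k+1) + k.factorial * stirling n k := by
        intro a
        rw [Nat.card_sum, missEq a, ih, ih]
      rw [Finset.sum_congr rfl (fun a _ => key a)]
      simp only [Finset.sum_const, Finset.card_univ, Fintype.card_fin, smul_eq_mul]
      rw [show stirling (n+1) (k+1) = (k + 1) * stirling n (k + 1) + stirling n k from rfl]
      rw [Nat.factorial_succ]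
      ring

/-- transfer of level-set filters along the labeling bijection -/
theorem image_filter_level (n : ℕ) (f l g : ℕ → ℕ)
    (hbij : Set.BijOn l (Set.Icc 1 n) (Set.Icc 1 n))
    (hgl : ∀ x ∈ Set.Icc 1 n, g (l x) = f x) (P : ℕ → Prop) [DecidablePred P] :
    ((Finset.Icc 1 n).filter (fun i => P (f i))).image l
      = (Finset.Icc 1 n).filter (fun i => P (g i)) := by
  ext b
  simp only [Finset.mem_image, Finset.mem_filter, Finset.mem_Icc]
  constructor
  · rintro ⟨x, ⟨hx, hPx⟩, rfl⟩
    have hx' : x ∈ Set.Icc 1 n := Set.mem_Icc.2 hx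
    have hlx := hbij.mapsTo hx'
    exact ⟨Set.mem_Icc.1 hlx, by rw [hgl x hx']; exact hPx⟩
  · rintro ⟨hb, hPb⟩
    have hb' : b ∈ Set.Icc 1 n := Set.mem_Icc.2 hb
    obtain ⟨x, hx, rfl⟩ := hbij.surjOn hb'
    rw [hgl x hx] at hPb
    exact ⟨x, ⟨Set.mem_Icc.1 hx, hPb⟩, rfl⟩

theorem card_filter_level (n : ℕ) (f l g : ℕ → ℕ)
    (hbij : Set.BijOn l (Set.Icc 1 n) (Set.Icc 1 n))
    (hgl : ∀ x ∈ Set.Icc 1 n, g (l x) = f x) (P : ℕ → Prop) [DecidablePred P] :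
    ((Finset.Icc 1 n).filter (fun i => P (f i))).card
      = ((Finset.Icc 1 n).filter (fun i => P (g i))).card := by
  rw [← image_filter_level n f l g hbij hgl P]
  rw [Finset.card_image_of_injOn]
  intro x hx y hy hxy
  have hx' : x ∈ Set.Icc 1 n := by
    have := Finset.mem_filter.1 hx
    exact Set.mem_Icc.2 (Finset.mem_Icc.1 this.1)
  have hy' : y ∈ Set.Icc 1 n := by
    have := Finset.mem_filter.1 hy
    exact Set.mem_Icc.2 (Finset.mem_Icc.1 this.1)
  exact hbij.injOn hx' hy' hxy

noncomputable def PhiMap (n k : ℕ)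
    (p : {p : (ℕ → ℕ) × (ℕ → ℕ) //
        Set.MapsTo p.1 (Set.Icc 1 n) (Set.Icc 1 k) ∧
        Set.SurjOn p.1 (Set.Icc 1 n) (Set.Icc 1 k) ∧
        MonotoneOn p.1 (Set.Icc 1 n) ∧
        (∀ i, i ∉ Set.Icc 1 n → p.1 i = 0) ∧
        PermOn n p.2 ∧
        (∀ i i', i ∈ Set.Icc 1 n → i' ∈ Set.Icc 1 n → i < i' → p.1 i = p.1 i' →
          p.2 i' < p.2 i)}) :
    {g : ℕ → ℕ // (∀ i, 1 ≤ i → i ≤ n → 1 ≤ g i ∧ g i ≤ k) ∧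
        (∀ v, 1 ≤ v → v ≤ k → ∃ i, 1 ≤ i ∧ i ≤ n ∧ g i = v) ∧
        (∀ i, ¬(1 ≤ i ∧ i ≤ n) → g i = 0)} :=
  ⟨fun i => if 1 ≤ i ∧ i ≤ n then p.1.1 (Function.invFunOn p.1.2 (Set.Icc 1 n) i) else 0, by
    obtain ⟨hm, hs, hmono, hz, ⟨hbij, hid⟩, hdec⟩ := p.2
    refine ⟨?_, ?_, ?_⟩
    · intro i h1 h2
      simp only [if_pos (show 1 ≤ i ∧ i ≤ n from ⟨h1, h2⟩)]
      have hmemi : i ∈ Set.Icc 1 n := Set.mem_Icc.2 ⟨h1, h2⟩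
      exact Set.mem_Icc.1 (hm (hbij.surjOn.mapsTo_invFunOn hmemi))
    · intro v hv1 hv2
      obtain ⟨x, hx, hfx⟩ := hs (Set.mem_Icc.2 ⟨hv1, hv2⟩)
      have hlx : p.1.2 x ∈ Set.Icc 1 n := hbij.mapsTo hx
      refine ⟨p.1.2 x, (Set.mem_Icc.1 hlx).1, (Set.mem_Icc.1 hlx).2, ?_⟩
      simp only [if_pos (Set.mem_Icc.1 hlx)]
      rw [hbij.injOn.leftInvOn_invFunOn hx]
      exact hfx
    · intro i hi
      simp only [if_neg hi]⟩


theorem cardS (n k : ℕ) :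
    Nat.card {p : (ℕ → ℕ) × (ℕ → ℕ) //
        Set.MapsTo p.1 (Set.Icc 1 n) (Set.Icc 1 k) ∧
        Set.SurjOn p.1 (Set.Icc 1 n) (Set.Icc 1 k) ∧
        MonotoneOn p.1 (Set.Icc 1 n) ∧
        (∀ i, i ∉ Set.Icc 1 n → p.1 i = 0) ∧
        PermOn n p.2 ∧
        (∀ i i', i ∈ Set.Icc 1 n → i' ∈ Set.Icc 1 n → i < i' → p.1 i = p.1 i' →
          p.2 i' < p.2 i)} =
      Nat.card {g : ℕ → ℕ // (∀ i, 1 ≤ i → i ≤ n → 1 ≤ g i ∧ g i ≤ k) ∧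
        (∀ v, 1 ≤ v → v ≤ k → ∃ i, 1 ≤ i ∧ i ≤ n ∧ g i = v) ∧
        (∀ i, ¬(1 ≤ i ∧ i ≤ n) → g i = 0)} := by
  classical
  apply Nat.card_eq_of_bijective (PhiMap n k)
  constructor
  · rintro ⟨⟨f1, l1⟩, hp1⟩ ⟨⟨f2, l2⟩, hp2⟩ hEq
    obtain ⟨hm1, hs1, hmono1, hz1, ⟨hbij1, hid1⟩, hdec1⟩ := hp1
    obtain ⟨hm2, hs2, hmono2, hz2, ⟨hbij2, hid2⟩, hdec2⟩ := hp2
    have hEq' : ∀ i, (if 1 ≤ i ∧ i ≤ n then f1 (Function.invFunOn l1 (Set.Icc 1 n) i) else 0)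
        = (if 1 ≤ i ∧ i ≤ n then f2 (Function.invFunOn l2 (Set.Icc 1 n) i) else 0) :=
      fun i => congrFun (congrArg Subtype.val hEq) i
    set G : ℕ → ℕ :=
      fun i => if 1 ≤ i ∧ i ≤ n then f1 (Function.invFunOn l1 (Set.Icc 1 n) i) else 0 with hG
    have hgl1 : ∀ x ∈ Set.Icc 1 n, G (l1 x) = f1 x := by
      intro x hx
      have hlx := Set.mem_Icc.1 (hbij1.mapsTo hx)
      show (if 1 ≤ l1 x ∧ l1 x ≤ n then f1 (Function.invFunOn l1 (Set.Icc 1 n) (l1 x)) else 0)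
        = f1 x
      rw [if_pos hlx, hbij1.injOn.leftInvOn_invFunOn hx]
    have hgl2 : ∀ x ∈ Set.Icc 1 n, G (l2 x) = f2 x := by
      intro x hx
      have hlx := Set.mem_Icc.1 (hbij2.mapsTo hx)
      show (if 1 ≤ l2 x ∧ l2 x ≤ n then f1 (Function.invFunOn l1 (Set.Icc 1 n) (l2 x)) else 0)
        = f2 x
      rw [hEq' (l2 x), if_pos hlx, hbij2.injOn.leftInvOn_invFunOn hx]
    have hfeq : f1 = f2 := by
      funext i
      by_cases hi : 1 ≤ i ∧ i ≤ n
      · have hi' : i ∈ Finset.Icc 1 n := Finset.mem_Icc.2 hi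
        have hc : ∀ v, ((Finset.Icc 1 n).filter (fun i => f1 i ≤ v)).card
            = ((Finset.Icc 1 n).filter (fun i => f2 i ≤ v)).card := fun v =>
          (card_filter_level n f1 l1 G hbij1 hgl1 (fun t => t ≤ v)).trans
            (card_filter_level n f2 l2 G hbij2 hgl2 (fun t => t ≤ v)).symm
        apply le_antisymm
        · have h1 : f2 i ≤ f2 i := le_refl _
          rw [mono_levels n f2 hmono2 (f2 i) i hi', ← hc (f2 i),
            ← mono_levels n f1 hmono1 (f2 i) i hi'] at h1
          exact h1
        · have h1 : f1 i ≤ f1 i := le_refl _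
          rw [mono_levels n f1 hmono1 (f1 i) i hi', hc (f1 i),
            ← mono_levels n f2 hmono2 (f1 i) i hi'] at h1
          exact h1
      · exact (hz1 i (fun h => hi (Set.mem_Icc.1 h))).trans
          (hz2 i (fun h => hi (Set.mem_Icc.1 h))).symm
    have hleq : l1 = l2 := by
      funext i
      by_cases hi : 1 ≤ i ∧ i ≤ n
      · refine anti_unique ((Finset.Icc 1 n).filter (fun i' => f1 i' = f1 i)) l1 l2 ?_ ?_ ?_ i
          (Finset.mem_filter.2 ⟨Finset.mem_Icc.2 hi, rfl⟩)
        · intro x hx x' hx' hlt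
          have hx1 := Finset.mem_filter.1 hx
          have hx2 := Finset.mem_filter.1 hx'
          exact hdec1 x x' (Set.mem_Icc.2 (Finset.mem_Icc.1 hx1.1))
            (Set.mem_Icc.2 (Finset.mem_Icc.1 hx2.1)) hlt (hx1.2.trans hx2.2.symm)
        · intro x hx x' hx' hlt
          have hx1 := Finset.mem_filter.1 hx
          have hx2 := Finset.mem_filter.1 hx'
          exact hdec2 x x' (Set.mem_Icc.2 (Finset.mem_Icc.1 hx1.1))
            (Set.mem_Icc.2 (Finset.mem_Icc.1 hx2.1)) hlt
            (by rw [← hfeq]; exact hx1.2.trans hx2.2.symm)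
        · calc ((Finset.Icc 1 n).filter (fun i' => f1 i' = f1 i)).image l1
              = (Finset.Icc 1 n).filter (fun i' => G i' = f1 i) :=
                image_filter_level n f1 l1 G hbij1 hgl1 (fun t => t = f1 i)
            _ = ((Finset.Icc 1 n).filter (fun i' => f2 i' = f1 i)).image l2 :=
                (image_filter_level n f2 l2 G hbij2 hgl2 (fun t => t = f1 i)).symm
            _ = ((Finset.Icc 1 n).filter (fun i' => f1 i' = f1 i)).image l2 := by rw [hfeq]
      · exact (hid1 i (fun h => hi (Set.mem_Icc.1 h))).trans
          (hid2 i (fun h => hi (Set.mem_Icc.1 h))).symm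
    apply Subtype.ext
    show (f1, l1) = (f2, l2)
    rw [hfeq, hleq]
  · rintro ⟨g, hg1, hg2, hg3⟩
    obtain ⟨f, l, c1, c2, c3, c4, c5, c6, c7, c8⟩ := construct n k g hg1 hg2
    refine ⟨⟨(f, l), ?_, ?_, ?_, ?_, ?_, ?_⟩, ?_⟩
    · intro x hx
      have hx' := Set.mem_Icc.1 hx
      exact Set.mem_Icc.2 (c1 x hx'.1 hx'.2)
    · intro v hv
      have hv' := Set.mem_Icc.1 hv
      obtain ⟨i, hi1, hi2, hfi⟩ := c2 v hv'.1 hv'.2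
      exact ⟨i, Set.mem_Icc.2 ⟨hi1, hi2⟩, hfi⟩
    · exact c3
    · intro i hi
      exact c4 i (fun h => hi (Set.mem_Icc.2 h))
    · exact ⟨c5, fun i hi => c6 i (fun h => hi (Set.mem_Icc.2 h))⟩
    · intro i i' hi hi' hlt hfe
      exact c7 i i' (Set.mem_Icc.1 hi).1 (Set.mem_Icc.1 hi).2 (Set.mem_Icc.1 hi').1
        (Set.mem_Icc.1 hi').2 hlt hfe
    · apply Subtype.ext
      funext i
      show (if 1 ≤ i ∧ i ≤ n then f (Function.invFunOn l (Set.Icc 1 n) i) else 0) = g i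
      by_cases hi : 1 ≤ i ∧ i ≤ n
      · rw [if_pos hi]
        have hi' : i ∈ Set.Icc 1 n := Set.mem_Icc.2 hi
        have hx : Function.invFunOn l (Set.Icc 1 n) i ∈ Set.Icc 1 n :=
          c5.surjOn.mapsTo_invFunOn hi'
        have hlx : l (Function.invFunOn l (Set.Icc 1 n) i) = i :=
          c5.surjOn.rightInvOn_invFunOn hi'
        rw [← c8 _ (Set.mem_Icc.1 hx).1 (Set.mem_Icc.1 hx).2, hlx]
      · rw [if_neg hi]
        exact (hg3 i hi).symm

noncomputable def TtoFin (n k : ℕ)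
    (g : {g : ℕ → ℕ // (∀ i, 1 ≤ i → i ≤ n → 1 ≤ g i ∧ g i ≤ k) ∧
        (∀ v, 1 ≤ v → v ≤ k → ∃ i, 1 ≤ i ∧ i ≤ n ∧ g i = v) ∧
        (∀ i, ¬(1 ≤ i ∧ i ≤ n) → g i = 0)}) :
    {G : Fin n → Fin k // Function.Surjective G} :=
  ⟨fun x => ⟨g.1 (x.1+1) - 1, by
    have hx := x.2
    have := g.2.1 (x.1+1) (by omega) (by omega)
    omega⟩, by
    intro b
    have hb := b.2
    obtain ⟨i, hi1, hi2, hgi⟩ := g.2.2.1 (b.1+1) (by omega) (by omega)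
    refine ⟨⟨i-1, by omega⟩, ?_⟩
    apply Fin.ext
    show g.1 (i-1+1) - 1 = b.1
    rw [show i-1+1 = i by omega, hgi]
    omega⟩

theorem cardT (n k : ℕ) :
    Nat.card {g : ℕ → ℕ // (∀ i, 1 ≤ i → i ≤ n → 1 ≤ g i ∧ g i ≤ k) ∧
        (∀ v, 1 ≤ v → v ≤ k → ∃ i, 1 ≤ i ∧ i ≤ n ∧ g i = v) ∧
        (∀ i, ¬(1 ≤ i ∧ i ≤ n) → g i = 0)} =
      Nat.card {G : Fin n → Fin k // Function.Surjective G} := by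
  classical
  apply Nat.card_eq_of_bijective (TtoFin n k)
  constructor
  · rintro ⟨g1, hg1⟩ ⟨g2, hg2⟩ hEq
    apply Subtype.ext
    funext i
    by_cases hi : 1 ≤ i ∧ i ≤ n
    · have h0 := congrFun (congrArg Subtype.val hEq) (⟨i-1, by omega⟩ : Fin n)
      have hval : g1 (i-1+1) - 1 = g2 (i-1+1) - 1 := congrArg Fin.val h0
      rw [show i-1+1 = i by omega] at hval
      have h1 := hg1.1 i hi.1 hi.2
      have h2 := hg2.1 i hi.1 hi.2
      show g1 i = g2 i
      omega
    · exact (hg1.2.2 i hi).trans (hg2.2.2 i hi).symm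
  · rintro ⟨Gf, hGf⟩
    refine ⟨⟨fun i => if h : 1 ≤ i ∧ i ≤ n then (Gf ⟨i-1, by omega⟩).1 + 1 else 0,
      ?_, ?_, ?_⟩, ?_⟩
    · intro i h1 h2
      simp only [dif_pos (show 1 ≤ i ∧ i ≤ n from ⟨h1, h2⟩)]
      exact ⟨by omega, (Gf ⟨i-1, by omega⟩).2⟩
    · intro v h1 h2
      obtain ⟨x, hx⟩ := hGf ⟨v-1, by omega⟩
      have hxn := x.2
      refine ⟨x.1+1, by omega, by omega, ?_⟩
      simp only [dif_pos (show 1 ≤ x.1+1 ∧ x.1+1 ≤ n from ⟨by omega, by omega⟩),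
        Nat.add_sub_cancel, Fin.eta]
      rw [hx]
      show v - 1 + 1 = v
      omega
    · intro i hi
      simp only [dif_neg hi]
    · apply Subtype.ext
      funext x
      apply Fin.ext
      have hxn := x.2
      show (if h : 1 ≤ x.1+1 ∧ x.1+1 ≤ n then
          (Gf ⟨x.1+1-1, by omega⟩).1 + 1 else 0) - 1 = (Gf x).1
      simp only [dif_pos (show 1 ≤ x.1+1 ∧ x.1+1 ≤ n from ⟨by omega, by omega⟩),
        Nat.add_sub_cancel, Fin.eta]

/-- Pairs `(f, ℓ)` where `f` encodes a partition of `[n]` into `n - j` nonempty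
parts of consecutive integers (`f` is the monotone assignment of each element to
its part, numbered `1,…,n-j` from left to right), and `ℓ` is a bijective labeling
of `[n]` by `[n]` whose labels are strictly decreasing along each part.  Their
number equals the number `(n-j)! · S(n, n-j)` of surjections from `[n]` onto `[n-j]`. -/
theorem consecutive_partitions_with_decreasing_labels (n j : ℕ)
    (hj : 1 ≤ j) (hjn : j < n) :
    Nat.card {p : (ℕ → ℕ) × (ℕ → ℕ) //
        Set.MapsTo p.1 (Set.Icc 1 n) (Set.Icc 1 (n - j)) ∧
        Set.SurjOn p.1 (Set.Icc 1 n) (Set.Icc 1 (n - j)) ∧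
        MonotoneOn p.1 (Set.Icc 1 n) ∧
        (∀ i, i ∉ Set.Icc 1 n → p.1 i = 0) ∧
        PermOn n p.2 ∧
        (∀ i i', i ∈ Set.Icc 1 n → i' ∈ Set.Icc 1 n → i < i' → p.1 i = p.1 i' →
          p.2 i' < p.2 i)} =
      Nat.factorial (n - j) * stirling n (n - j) := by
  rw [cardS n (n - j), cardT n (n - j), card_surj n (n - j)]
end

section
/- Let n ≥ 1 and m ≥ C(n,2) − ⌊n/2⌋. Among all simple graphs on n vertices with m edges, a graph whose complement is a matching (a set of pairwise disjoint edges) maximizes the number of acyclic orientations. -/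
/-- An orientation of a simple graph `G`, given as a relation `o` on vertices:
only edges of `G` are oriented, and each edge gets exactly one direction. -/
def IsOrientation {V : Type*} (G : SimpleGraph V) (o : V → V → Prop) : Prop :=
  (∀ u v, o u v → G.Adj u v) ∧ ∀ u v, G.Adj u v → (o u v ↔ ¬ o v u)

/-- An orientation is acyclic when it has no directed cycle. -/
def IsAcyclicRel {V : Type*} (o : V → V → Prop) : Prop :=
  Irreflexive (Relation.TransGen o)

/-- `s` is a sink of the orientation `o`: no outgoing edges. -/
def IsSinkOf {V : Type*} (o : V → V → Prop) (s : V) : Prop := ∀ v, ¬ o s v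

/-- The number of acyclic orientations of `G`. -/
noncomputable def aoCount {V : Type*} (G : SimpleGraph V) : ℕ :=
  Nat.card {o : V → V → Prop // IsOrientation G o ∧ IsAcyclicRel o}

/-- The number of acyclic orientations of `G` whose unique sink is `s`. -/
noncomputable def ausoCount {V : Type*} (G : SimpleGraph V) (s : V) : ℕ :=
  Nat.card {o : V → V → Prop // IsOrientation G o ∧ IsAcyclicRel o ∧
    ∀ v, IsSinkOf o v ↔ v = s}

/-!
Orienting every edge of `G` towards the later endpoint in a permutation `σ` of the vertices
yields each acyclic orientation. Among the permutations inducing a given orientation, one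
maximizing `∑ v * σ v` never puts `a` immediately after `b` for a non-edge `a < b`: swapping the
two keeps the orientation and increases the sum. So `aoCount G ≤ A(P)`, the number of
permutations avoiding the successions `P` of the non-edges, with equality when `Gᶜ` is a
matching: two such permutations inducing the same orientation cannot differ at a first position.

By inclusion–exclusion, `A(P) = ∑_{T ⊆ P} (-1)^|T| N(T)`, where `N(T)` counts the permutations
realizing all successions of `T`; as the pairs in `P` are increasing, it is `(n - |T|)!` when
both projections are injective on `T` and `0` otherwise. When `Gᶜ` is a matching every `T` is of
the first kind, so the theorem reduces to the nonnegativity of `∑ (-1)^|T| (n - |T|)!` over the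
bad `T ⊆ P`. This is a Bonferroni-type bound: each bad set of size `i + 1 ≥ 3` contains a bad set
of size `i`, and a set of size `i` has at most `|P| - i ≤ n - i` one-point extensions, so level
`2j + 1` is dominated by level `2j`.
-/

open Finset Equiv

namespace AcyclicOrientation

variable {n : ℕ}

def IsPartialInj {α β : Type*} (T : Finset (α × β)) : Prop :=
  Set.InjOn Prod.fst (T : Set (α × β)) ∧ Set.InjOn Prod.snd (T : Set (α × β))

lemma IsPartialInj.mono {α β : Type*} {S T : Finset (α × β)} (hT : IsPartialInj T)
    (h : S ⊆ T) : IsPartialInj S :=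
  ⟨hT.1.mono (coe_subset.2 h), hT.2.mono (coe_subset.2 h)⟩

lemma IsPartialInj.card_le {α β : Type*} [Fintype α] {T : Finset (α × β)}
    (hT : IsPartialInj T) :
    #T ≤ Fintype.card α := by
  classical
  rw [← card_image_of_injOn hT.1]
  exact card_le_univ _

lemma exists_erase_not_isPartialInj {α β : Type*} [DecidableEq α] [DecidableEq β]
    {T : Finset (α × β)} (h : ¬ IsPartialInj T) (hT : 3 ≤ #T) :
    ∃ r ∈ T, ¬ IsPartialInj (T.erase r) := by
  obtain ⟨p, hp, q, hq, hpq⟩ :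
      ∃ p ∈ T, ∃ q ∈ T, ¬ IsPartialInj ({p, q} : Finset (α × β)) := by
    by_contra! H
    exact h ⟨fun p hp q hq e => (H p hp q hq).1 (by simp) (by simp) e,
      fun p hp q hq e => (H p hp q hq).2 (by simp) (by simp) e⟩
  obtain ⟨r, hr⟩ : (T \ {p, q}).Nonempty := by
    rw [← card_pos]
    have := le_card_sdiff {p, q} T
    have := card_le_two (a := p) (b := q)
    omega
  simp only [mem_sdiff, mem_insert, mem_singleton, not_or] at hr
  refine ⟨r, hr.1, fun h' => hpq (h'.mono ?_)⟩
  simp only [insert_subset_iff, singleton_subset_iff, mem_erase]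
  exact ⟨⟨Ne.symm hr.2.1, hp⟩, Ne.symm hr.2.2, hq⟩

section
open scoped Classical

lemma card_not_isPartialInj_succ_le {α β : Type*} (P : Finset (α × β)) {i : ℕ}
    (hi : 2 ≤ i) :
    #{T ∈ P.powersetCard (i + 1) | ¬ IsPartialInj T} ≤
      (#P - i) * #{T ∈ P.powersetCard i | ¬ IsPartialInj T} := by
  rw [← mul_one #{T ∈ P.powersetCard (i + 1) | ¬ IsPartialInj T}, mul_comm (#P - i)]
  refine card_mul_le_card_mul (fun T B => B ⊆ T) (fun T hT => ?_) (fun B hB => ?_)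
  · simp only [mem_filter, mem_powersetCard] at hT
    obtain ⟨r, hr, hTr⟩ := exists_erase_not_isPartialInj hT.2 (by omega)
    refine one_le_card.2 ⟨T.erase r, (mem_bipartiteAbove _).2 ⟨?_, erase_subset _ _⟩⟩
    simp only [mem_filter, mem_powersetCard, card_erase_of_mem hr, hT.1.2]
    exact ⟨⟨(erase_subset _ _).trans hT.1.1, rfl⟩, hTr⟩
  · simp only [mem_filter, mem_powersetCard] at hB
    calc #(bipartiteBelow _ _ B) ≤ #((P \ B).image fun x => insert x B) := by
          refine card_le_card fun T hT => ?_
          simp only [mem_bipartiteBelow, mem_filter, mem_powersetCard] at hT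
          obtain ⟨x, hxT, hxB⟩ := exists_of_ssubset (hT.2.ssubset_of_ne (by rintro rfl; omega))
          refine mem_image.2 ⟨x, mem_sdiff.2 ⟨hT.1.1.1 hxT, hxB⟩,
            eq_of_subset_of_card_le (insert_subset hxT hT.2) ?_⟩
          rw [card_insert_of_notMem hxB]
          omega
      _ ≤ #P - i := card_image_le.trans (by rw [card_sdiff_of_subset hB.1.1, hB.1.2])

end

lemma sum_range_alternating_nonneg {a : ℕ → ℤ} (ha : ∀ i, 0 ≤ a i)
    (h : ∀ j, a (2 * j + 1) ≤ a (2 * j)) (N : ℕ) :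
    0 ≤ ∑ i ∈ range N, (-1) ^ i * a i := by
  have even (m : ℕ) : 0 ≤ ∑ i ∈ range (2 * m), (-1) ^ i * a i := by
    induction m with
    | zero => simp
    | succ m ih =>
      rw [show 2 * (m + 1) = 2 * m + 1 + 1 by ring, sum_range_succ, sum_range_succ, pow_succ,
        pow_mul, neg_one_sq, one_pow]
      linarith [h m]
  obtain ⟨m, rfl | rfl⟩ := N.even_or_odd'
  · exact even m
  · rw [sum_range_succ, pow_mul, neg_one_sq, one_pow]
    linarith [even m, ha (2 * m)]

lemma sub_mul_factorial_le {k n : ℕ} (h : k ≤ n) (i : ℕ) :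
    (k - i) * (n - (i + 1)).factorial ≤ (n - i).factorial := by
  rcases lt_or_ge i n with hi | hi
  · rw [show n - i = n - (i + 1) + 1 by omega, Nat.factorial_succ]
    exact Nat.mul_le_mul_right _ (by omega)
  · simp [show k - i = 0 by omega]

lemma sum_filter_powerset_eq_sum_range {α : Type*} (s : Finset α) (p : Finset α → Prop)
    [DecidablePred p] (f : ℕ → ℤ) : ∑ T ∈ s.powerset with p T, f #T =
      ∑ i ∈ range (#s + 1), (#{T ∈ s.powersetCard i | p T} : ℤ) * f i := by
  rw [← sum_fiberwise_of_maps_to (g := card) (t := range (#s + 1)) fun T hT => by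
    simpa [Nat.lt_succ_iff] using card_le_card (mem_powerset.1 (mem_filter.1 hT).1)]
  refine sum_congr rfl fun i _ => ?_
  have : {T ∈ {T ∈ s.powerset | p T} | #T = i} = {T ∈ s.powersetCard i | p T} := by
    ext T
    simp only [mem_filter, mem_powerset, mem_powersetCard]
    tauto
  rw [this, sum_congr rfl fun T hT => by rw [(mem_powersetCard.1 (mem_filter.1 hT).1).2], sum_const,
    nsmul_eq_mul]

def Follows (σ : Perm (Fin n)) (p : Fin n × Fin n) : Prop :=
  (σ p.1 : ℕ) = σ p.2 + 1

instance (σ : Perm (Fin n)) : DecidablePred (Follows σ) :=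
  fun p => inferInstanceAs (Decidable ((σ p.1 : ℕ) = σ p.2 + 1))

lemma val_apply_ne {σ : Perm (Fin n)} {u v : Fin n} (h : u ≠ v) : (σ u : ℕ) ≠ σ v :=
  fun e => h (σ.injective (Fin.ext e))

def permsFollowing (T : Finset (Fin n × Fin n)) : Finset (Perm (Fin n)) :=
  {σ | ∀ p ∈ T, Follows σ p}

lemma mem_permsFollowing {T : Finset (Fin n × Fin n)} {σ : Perm (Fin n)} :
    σ ∈ permsFollowing T ↔ ∀ p ∈ T, Follows σ p := by
  simp [permsFollowing]

lemma isPartialInj_of_mem_permsFollowing {T : Finset (Fin n × Fin n)} {σ : Perm (Fin n)}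
    (hσ : σ ∈ permsFollowing T) : IsPartialInj T := by
  rw [mem_permsFollowing] at hσ
  have key {p q} (hp : p ∈ T) (hq : q ∈ T) : p.1 = q.1 ↔ p.2 = q.2 := by
    have hp' := hσ p hp
    have hq' := hσ q hq
    unfold Follows at hp' hq'
    rw [← σ.injective.eq_iff, ← σ.injective.eq_iff (a := p.2), Fin.ext_iff, Fin.ext_iff]
    omega
  exact ⟨fun p hp q hq h => Prod.ext h ((key hp hq).1 h),
    fun p hp q hq h => Prod.ext ((key hp hq).2 h) h⟩

-- the new position of the entry at position `x` when the entry at position `p` is moved to `q`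
def moveNat (p q x : ℕ) : ℕ :=
  if x = p then q else if p < x ∧ x ≤ q then x - 1 else if q ≤ x ∧ x < p then x + 1 else x

lemma moveNat_lt {p q x : ℕ} (hp : p < n) (hq : q < n) (hx : x < n) : moveNat p q x < n := by
  unfold moveNat; split_ifs <;> omega

lemma moveNat_moveNat (p q r x : ℕ) : moveNat q r (moveNat p q x) = moveNat p r x := by
  unfold moveNat; split_ifs <;> omega

lemma moveNat_self (p x : ℕ) : moveNat p p x = x := by
  unfold moveNat; split_ifs <;> omega

def movePerm (p q : Fin n) : Perm (Fin n) where
  toFun x := ⟨moveNat p q x, moveNat_lt p.isLt q.isLt x.isLt⟩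
  invFun x := ⟨moveNat q p x, moveNat_lt q.isLt p.isLt x.isLt⟩
  left_inv x := Fin.ext (by simp [moveNat_moveNat, moveNat_self])
  right_inv x := Fin.ext (by simp [moveNat_moveNat, moveNat_self])

def moveTo (x r : Fin n) (σ : Perm (Fin n)) : Perm (Fin n) :=
  σ.trans (movePerm (σ x) r)

lemma moveTo_apply_val (x r : Fin n) (σ : Perm (Fin n)) (y : Fin n) :
    (moveTo x r σ y : ℕ) = moveNat (σ x) r (σ y) := rfl

lemma moveTo_apply_self (x r : Fin n) (σ : Perm (Fin n)) : moveTo x r σ x = r :=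
  Fin.ext (by simp [moveTo_apply_val, moveNat])

lemma moveTo_moveTo (x r r' : Fin n) (σ : Perm (Fin n)) :
    moveTo x r' (moveTo x r σ) = moveTo x r' σ :=
  Equiv.ext fun y => Fin.ext (by simp only [moveTo_apply_val, moveTo_apply_self, moveNat_moveNat])

lemma moveTo_apply_eq_self (x : Fin n) (σ : Perm (Fin n)) : moveTo x (σ x) σ = σ :=
  Equiv.ext fun y => Fin.ext (by simp only [moveTo_apply_val, moveNat_self])

def slotAfter (x y : Fin n) (σ : Perm (Fin n)) : Fin n :=
  ⟨if (σ y : ℕ) < σ x then σ y + 1 else σ y, by have := (σ x).isLt; split_ifs <;> omega⟩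

def moveAfter (x y : Fin n) (σ : Perm (Fin n)) : Perm (Fin n) :=
  moveTo x (slotAfter x y σ) σ

lemma follows_moveAfter {x y : Fin n} (hxy : x ≠ y) (σ : Perm (Fin n)) :
    Follows (moveAfter x y σ) (x, y) := by
  have := val_apply_ne (σ := σ) hxy
  simp only [Follows, moveAfter, moveTo_apply_val, slotAfter, moveNat]
  split_ifs <;> omega

lemma eq_moveTo_moveAfter (x y : Fin n) (σ : Perm (Fin n)) :
    σ = moveTo x (σ x) (moveAfter x y σ) := by
  rw [moveAfter, moveTo_moveTo, moveTo_apply_eq_self]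

lemma moveAfter_moveTo {x y : Fin n} {τ : Perm (Fin n)} (h : Follows τ (x, y)) (r : Fin n) :
    moveAfter x y (moveTo x r τ) = τ := by
  have hslot : slotAfter x y (moveTo x r τ) = τ x := by
    have := val_apply_ne (σ := τ) (show y ≠ x by rintro rfl; simp [Follows] at h)
    unfold Follows at h
    ext
    simp only [slotAfter, moveTo_apply_val, moveNat] at h ⊢
    split_ifs <;> omega
  rw [moveAfter, hslot, moveTo_moveTo, moveTo_apply_eq_self]

def cutPos (x : Fin n) (τ : Perm (Fin n)) (q : Fin n × Fin n) : Fin n :=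
  if τ x < τ q.2 then τ q.2 else τ q.1

lemma follows_moveTo_iff {x r : Fin n} {τ : Perm (Fin n)} {q : Fin n × Fin n}
    (hq : Follows τ q) (h1 : q.1 ≠ x) (h2 : q.2 ≠ x) :
    Follows (moveTo x r τ) q ↔ r ≠ cutPos x τ q := by
  have := val_apply_ne (σ := τ) h1
  have := val_apply_ne (σ := τ) h2
  unfold Follows at hq ⊢
  simp only [moveTo_apply_val, cutPos, ne_eq, Fin.ext_iff, Fin.lt_def]
  split_ifs <;> simp only [moveNat] <;> split_ifs <;> omega

lemma follows_moveAfter_of_follows {x y : Fin n} {σ : Perm (Fin n)} {q : Fin n × Fin n}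
    (hq : Follows σ q) (h1 : q.1 ≠ x) (h2 : q.2 ≠ x) (h3 : q.2 ≠ y) :
    Follows (moveAfter x y σ) q := by
  have := val_apply_ne (σ := σ) h1
  have := val_apply_ne (σ := σ) h2
  have := val_apply_ne (σ := σ) h3
  unfold Follows at hq ⊢
  simp only [moveAfter, moveTo_apply_val, slotAfter, moveNat]
  split_ifs <;> omega

lemma injOn_cutPos {T : Finset (Fin n × Fin n)} (hT : IsPartialInj T) {x : Fin n}
    {τ : Perm (Fin n)} (hτ : ∀ q ∈ T, Follows τ q) (hx : ∀ q ∈ T, q.2 ≠ x) :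
    Set.InjOn (cutPos x τ) T := by
  intro q hq q' hq' h
  have := hτ q hq
  have := hτ q' hq'
  have := val_apply_ne (σ := τ) (hx q hq)
  have := val_apply_ne (σ := τ) (hx q' hq')
  unfold cutPos Follows at *
  split_ifs at h with h1 h2 h2
  · exact hT.2 hq hq' (τ.injective h)
  · rw [Fin.lt_def] at h1 h2; rw [Fin.ext_iff] at h; omega
  · rw [Fin.lt_def] at h1 h2; rw [Fin.ext_iff] at h; omega
  · exact hT.1 hq hq' (τ.injective h)

lemma card_fiber_moveAfter {T : Finset (Fin n × Fin n)} (hT : IsPartialInj T) {a b : Fin n}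
    (hab : (a, b) ∈ T) (hne : ∀ q ∈ T.erase (a, b), q.1 ≠ a ∧ q.2 ≠ a ∧ q.2 ≠ b)
    {τ : Perm (Fin n)} (hτ : τ ∈ permsFollowing T) :
    #{σ ∈ permsFollowing (T.erase (a, b)) | moveAfter a b σ = τ} = n - #(T.erase (a, b)) := by
  classical
  rw [mem_permsFollowing] at hτ
  have hfollows (r : Fin n) : moveTo a r τ ∈ permsFollowing (T.erase (a, b)) ↔
      r ∉ (T.erase (a, b)).image (cutPos a τ) := by
    simp only [mem_permsFollowing, mem_image, not_exists, not_and]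
    refine forall₂_congr fun q hq => ?_
    rw [follows_moveTo_iff (hτ q (mem_of_mem_erase hq)) (hne q hq).1 (hne q hq).2.1, ne_comm]
  have hfiber : {σ ∈ permsFollowing (T.erase (a, b)) | moveAfter a b σ = τ} =
      (univ \ (T.erase (a, b)).image (cutPos a τ)).image fun r => moveTo a r τ := by
    ext σ
    rw [mem_filter, mem_image]
    simp only [mem_sdiff, mem_univ, true_and]
    constructor
    · rintro ⟨hσ, rfl⟩
      refine ⟨σ a, (hfollows _).1 ?_, (eq_moveTo_moveAfter a b σ).symm⟩
      rwa [← eq_moveTo_moveAfter]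
    · rintro ⟨r, hr, rfl⟩
      exact ⟨(hfollows r).2 hr, moveAfter_moveTo (hτ _ hab) r⟩
  rw [hfiber, card_image_of_injective _ fun r r' h => by
      simpa only [moveTo_apply_self] using congrArg (· a) h,
    card_sdiff_of_subset (subset_univ _), card_univ, Fintype.card_fin,
    card_image_of_injOn (injOn_cutPos (hT.mono (erase_subset _ _))
      (fun q hq => hτ q (mem_of_mem_erase hq)) fun q hq => (hne q hq).2.1)]

lemma card_permsFollowing_erase {T : Finset (Fin n × Fin n)} (hT : IsPartialInj T) {a b : Fin n}
    (hab : (a, b) ∈ T) (ha : ∀ q ∈ T, q.2 ≠ a) :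
    #(permsFollowing (T.erase (a, b))) = (n - #(T.erase (a, b))) * #(permsFollowing T) := by
  classical
  have hne : ∀ q ∈ T.erase (a, b), q.1 ≠ a ∧ q.2 ≠ a ∧ q.2 ≠ b := fun q hq => by
    obtain ⟨hq, hqT⟩ := mem_erase.1 hq
    exact ⟨fun h => hq (hT.1 hqT hab h), ha q hqT, fun h => hq (hT.2 hqT hab h)⟩
  have hmaps (σ) (hσ : σ ∈ permsFollowing (T.erase (a, b))) :
      moveAfter a b σ ∈ permsFollowing T := by
    rw [mem_permsFollowing] at hσ ⊢
    intro q hq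
    by_cases hqab : q = (a, b)
    · exact hqab ▸ follows_moveAfter (ha _ hab).symm σ
    · have hq' := mem_erase.2 ⟨hqab, hq⟩
      exact follows_moveAfter_of_follows (hσ q hq') (hne q hq').1 (hne q hq').2.1 (hne q hq').2.2
  rw [card_eq_sum_card_fiberwise hmaps,
    sum_congr rfl fun τ hτ => card_fiber_moveAfter hT hab hne hτ, sum_const, smul_eq_mul,
    mul_comm]

theorem card_permsFollowing {T : Finset (Fin n × Fin n)} (hlt : ∀ p ∈ T, p.1 < p.2)
    (hT : IsPartialInj T) : #(permsFollowing T) = (n - #T).factorial := by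
  induction T using Finset.strongInduction with | H T ih => ?_
  rcases T.eq_empty_or_nonempty with rfl | hne
  · simp [permsFollowing, Fintype.card_perm]
  obtain ⟨⟨a, b⟩, hab, hmin⟩ := T.exists_min_image Prod.fst hne
  have ha : ∀ q ∈ T, q.2 ≠ a := fun q hq h => (hlt q hq).not_ge (h ▸ hmin q hq)
  have key := card_permsFollowing_erase hT hab ha
  rw [ih _ (erase_ssubset hab) (fun p hp => hlt p (mem_of_mem_erase hp))
    (hT.mono (erase_subset _ _)), card_erase_of_mem hab] at key
  have := card_pos.2 hne
  have := hT.card_le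
  rw [Fintype.card_fin] at this
  rw [show n - (#T - 1) = n - #T + 1 by omega, Nat.factorial_succ] at key
  exact (Nat.eq_of_mul_eq_mul_left (Nat.succ_pos _) key).symm

def permsAvoiding (P : Finset (Fin n × Fin n)) : Finset (Perm (Fin n)) :=
  {σ | ∀ p ∈ P, ¬ Follows σ p}

lemma mem_permsAvoiding {P : Finset (Fin n × Fin n)} {σ : Perm (Fin n)} :
    σ ∈ permsAvoiding P ↔ ∀ p ∈ P, ¬ Follows σ p := by
  simp [permsAvoiding]

lemma card_permsAvoiding_eq_sum (P : Finset (Fin n × Fin n)) :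
    (#(permsAvoiding P) : ℤ) = ∑ T ∈ P.powerset, (-1 : ℤ) ^ #T * #(permsFollowing T) := by
  have hinf (T : Finset (Fin n × Fin n)) :
      T.inf (fun p => permsFollowing {p}) = permsFollowing T := by
    ext σ; simp [mem_inf, mem_permsFollowing]
  have := inclusion_exclusion_card_inf_compl P fun p => permsFollowing {p}
  simp only [hinf] at this
  rw [← this]
  congr 2
  ext σ
  simp [mem_inf, mem_permsAvoiding, mem_permsFollowing]

section
open scoped Classical

lemma sum_not_isPartialInj_nonneg {P : Finset (Fin n × Fin n)} (hP : #P ≤ n) :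
    0 ≤ ∑ T ∈ P.powerset with ¬ IsPartialInj T, (-1 : ℤ) ^ #T * (n - #T).factorial := by
  rw [sum_filter_powerset_eq_sum_range P _ fun i => (-1 : ℤ) ^ i * (n - i).factorial]
  set d : ℕ → ℕ := fun i => #{T ∈ P.powersetCard i | ¬ IsPartialInj T}
  rw [sum_congr rfl fun i _ => mul_left_comm _ _ _]
  refine sum_range_alternating_nonneg (fun i => by positivity) (fun j => ?_) _
  obtain rfl | hj := j.eq_zero_or_pos
  · have : d 1 = 0 := by
      simp only [d, card_eq_zero, filter_eq_empty_iff, mem_powersetCard, card_eq_one, not_not]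
      rintro _ ⟨-, p, rfl⟩
      simp [IsPartialInj]
    change ((d 1 : ℕ) : ℤ) * _ ≤ _
    rw [this, Nat.cast_zero, zero_mul]
    positivity
  · suffices d (2 * j + 1) * (n - (2 * j + 1)).factorial ≤ d (2 * j) * (n - 2 * j).factorial by
      exact_mod_cast this
    calc d (2 * j + 1) * (n - (2 * j + 1)).factorial
        ≤ (#P - 2 * j) * d (2 * j) * (n - (2 * j + 1)).factorial := by
          gcongr
          exact card_not_isPartialInj_succ_le P (by omega)
      _ ≤ d (2 * j) * (n - 2 * j).factorial := by
          rw [mul_comm _ (d _), mul_assoc]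
          exact Nat.mul_le_mul_left _ (sub_mul_factorial_le hP _)

lemma card_permsAvoiding_add_sum_not_isPartialInj {P : Finset (Fin n × Fin n)}
    (hP : ∀ p ∈ P, p.1 < p.2) :
    (#(permsAvoiding P) : ℤ) +
        ∑ T ∈ P.powerset with ¬ IsPartialInj T, (-1 : ℤ) ^ #T * (n - #T).factorial =
      ∑ T ∈ P.powerset, (-1 : ℤ) ^ #T * (n - #T).factorial := by
  rw [card_permsAvoiding_eq_sum, ← sum_filter_add_sum_filter_not P.powerset IsPartialInj,
    ← sum_filter_add_sum_filter_not P.powerset IsPartialInj]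
  have hinj : ∑ T ∈ P.powerset with IsPartialInj T, (-1 : ℤ) ^ #T * #(permsFollowing T) =
      ∑ T ∈ P.powerset with IsPartialInj T, (-1 : ℤ) ^ #T * (n - #T).factorial := by
    refine sum_congr rfl fun T hT => ?_
    obtain ⟨hTP, hT⟩ := mem_filter.1 hT
    rw [card_permsFollowing (fun p hp => hP p (mem_powerset.1 hTP hp)) hT]
  have hnot :
      ∑ T ∈ P.powerset with ¬ IsPartialInj T, (-1 : ℤ) ^ #T * #(permsFollowing T) = 0 :=
    sum_eq_zero fun T hT => by
      rw [card_eq_zero.2 (eq_empty_of_forall_notMem fun σ hσ =>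
        (mem_filter.1 hT).2 (isPartialInj_of_mem_permsFollowing hσ))]
      simp
  rw [hinj, hnot, add_zero]

end

theorem card_permsAvoiding_le {P Q : Finset (Fin n × Fin n)} (hP : ∀ p ∈ P, p.1 < p.2)
    (hQ : ∀ p ∈ Q, p.1 < p.2) (hQinj : IsPartialInj Q) (hcard : #P = #Q) :
    #(permsAvoiding P) ≤ #(permsAvoiding Q) := by
  classical
  have eP := card_permsAvoiding_add_sum_not_isPartialInj hP
  have eQ := card_permsAvoiding_add_sum_not_isPartialInj hQ
  rw [filter_false_of_mem fun T hT => not_not.2 (hQinj.mono (mem_powerset.1 hT)), sum_empty,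
    add_zero] at eQ
  rw [sum_powerset_apply_card fun k => (-1 : ℤ) ^ k * (n - k).factorial] at eP eQ
  have := sum_not_isPartialInj_nonneg (P := P) (by simpa [hcard] using hQinj.card_le)
  rw [hcard] at eP
  exact_mod_cast (by linarith : (#(permsAvoiding P) : ℤ) ≤ #(permsAvoiding Q))

def permOrientation (G : SimpleGraph (Fin n)) (σ : Perm (Fin n)) (u v : Fin n) : Prop :=
  G.Adj u v ∧ σ u < σ v

lemma isOrientation_permOrientation (G : SimpleGraph (Fin n)) (σ : Perm (Fin n)) :
    IsOrientation G (permOrientation G σ) := by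
  refine ⟨fun u v h => h.1, fun u v huv =>
    ⟨fun h h' => h.2.asymm h'.2, fun h => ⟨huv, ?_⟩⟩⟩
  exact (lt_or_gt_of_ne (σ.injective.ne huv.ne)).resolve_right fun hlt => h ⟨huv.symm, hlt⟩

lemma isAcyclicRel_permOrientation (G : SimpleGraph (Fin n)) (σ : Perm (Fin n)) :
    IsAcyclicRel (permOrientation G σ) := by
  have key : ∀ {u v}, Relation.TransGen (permOrientation G σ) u v → σ u < σ v := by
    intro u v h
    induction h with
    | single h => exact h.2
    | tail _ h ih => exact ih.trans h.2
  exact fun u h => (key h).false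

lemma exists_perm_lt_of_isAcyclicRel {o : Fin n → Fin n → Prop} (ho : IsAcyclicRel o) :
    ∃ σ : Perm (Fin n), ∀ u v, o u v → σ u < σ v := by
  classical
  -- the number of predecessors strictly increases along `o`; sort the vertices by it
  let rank : Fin n → ℕ := fun v => #{u | Relation.TransGen o u v}
  have hrank : ∀ u v, o u v → rank u < rank v := fun u v huv => by
    refine card_lt_card ⟨fun w hw => ?_, fun hsub => ho u ?_⟩
    · simp only [mem_filter, mem_univ, true_and] at hw ⊢
      exact hw.tail huv
    · simpa using hsub (by simpa using Relation.TransGen.single huv)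
  refine ⟨(Tuple.sort rank).symm, fun u v huv => lt_of_not_ge fun hle => ?_⟩
  have := Tuple.monotone_sort rank hle
  simp only [Function.comp_apply, Equiv.apply_symm_apply] at this
  exact (hrank u v huv).not_ge this

lemma exists_permOrientation_eq {G : SimpleGraph (Fin n)} {o : Fin n → Fin n → Prop}
    (hG : IsOrientation G o) (ho : IsAcyclicRel o) : ∃ σ, permOrientation G σ = o := by
  obtain ⟨σ, hσ⟩ := exists_perm_lt_of_isAcyclicRel ho
  refine ⟨σ, funext₂ fun u v => propext
    ⟨fun ⟨huv, hlt⟩ => ?_, fun h => ⟨hG.1 u v h, hσ u v h⟩⟩⟩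
  by_contra h
  exact (hσ v u (not_not.mp ((hG.2 u v huv).not.mp h))).asymm hlt

open Classical in
noncomputable def ltPairs (F : SimpleGraph (Fin n)) : Finset (Fin n × Fin n) :=
  {p | p.1 < p.2 ∧ F.Adj p.1 p.2}

lemma mem_ltPairs {F : SimpleGraph (Fin n)} {p : Fin n × Fin n} :
    p ∈ ltPairs F ↔ p.1 < p.2 ∧ F.Adj p.1 p.2 := by
  simp [ltPairs]

lemma fst_lt_snd_of_mem_ltPairs {F : SimpleGraph (Fin n)} {p : Fin n × Fin n}
    (hp : p ∈ ltPairs F) : p.1 < p.2 :=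
  (mem_ltPairs.1 hp).1

lemma card_ltPairs (F : SimpleGraph (Fin n)) : #(ltPairs F) = F.edgeSet.ncard := by
  rw [← Set.ncard_coe_finset]
  refine Set.ncard_congr (fun p _ => s(p.1, p.2)) (fun p hp => (mem_ltPairs.1 hp).2) ?_ ?_
  · intro p q hp hq h
    have hp := (mem_ltPairs.1 hp).1
    have hq := (mem_ltPairs.1 hq).1
    rcases Sym2.eq_iff.1 h with ⟨h1, h2⟩ | ⟨h1, h2⟩
    · exact Prod.ext h1 h2
    · exact absurd (h1 ▸ h2 ▸ hq) hp.asymm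
  · intro e he
    induction e using Sym2.ind with | _ u v => ?_
    rcases lt_or_gt_of_ne (F.ne_of_adj he) with h | h
    · exact ⟨(u, v), mem_ltPairs.2 ⟨h, he⟩, rfl⟩
    · exact ⟨(v, u), mem_ltPairs.2 ⟨h, he.symm⟩, Sym2.eq_swap⟩

lemma card_ltPairs_add_card_ltPairs_compl (F : SimpleGraph (Fin n)) :
    #(ltPairs F) + #(ltPairs Fᶜ) = #(ltPairs (⊤ : SimpleGraph (Fin n))) := by
  classical
  rw [← card_filter_add_card_filter_not (s := ltPairs ⊤)
    (p := fun p : Fin n × Fin n => F.Adj p.1 p.2)]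
  congr 2 <;> ext p <;> simp only [mem_ltPairs, mem_filter, SimpleGraph.compl_adj,
    SimpleGraph.top_adj] <;> grind

lemma swap_lt_swap_iff {i j p q : Fin n} (hij : (j : ℕ) = i + 1) (h : ¬ (p = i ∧ q = j))
    (h' : ¬ (p = j ∧ q = i)) : swap i j p < swap i j q ↔ p < q := by
  simp only [swap_apply_def]
  split_ifs <;> simp only [Fin.lt_def, Fin.ext_iff] at * <;> omega

lemma permOrientation_trans_swap {G : SimpleGraph (Fin n)} {τ : Perm (Fin n)} {a b : Fin n}
    (hab : ¬ G.Adj a b) (h : Follows τ (a, b)) :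
    permOrientation G (τ.trans (swap (τ b) (τ a))) = permOrientation G τ := by
  funext u v
  simp only [permOrientation, trans_apply, eq_iff_iff, and_congr_right_iff]
  refine fun huv => swap_lt_swap_iff h ?_ ?_ <;> simp only [EmbeddingLike.apply_eq_iff_eq] <;>
    rintro ⟨rfl, rfl⟩
  exacts [hab huv.symm, hab huv]

def weight (σ : Perm (Fin n)) : ℕ := ∑ v : Fin n, (v : ℕ) * (σ v : ℕ)

lemma weight_lt_weight_trans_swap {τ : Perm (Fin n)} {a b : Fin n} (hab : a < b)
    (h : Follows τ (a, b)) : weight τ < weight (τ.trans (swap (τ b) (τ a))) := by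
  have split (w : Fin n → ℕ) :
      ∑ v, w v = w a + (w b + ∑ v ∈ (univ.erase a).erase b, w v) := by
    rw [add_sum_erase _ _ (mem_erase.2 ⟨hab.ne', mem_univ b⟩), add_sum_erase _ _ (mem_univ a)]
  have rest :
      ∑ v ∈ (univ.erase a).erase b, (v : ℕ) * (τ.trans (swap (τ b) (τ a)) v : ℕ) =
        ∑ v ∈ (univ.erase a).erase b, (v : ℕ) * (τ v : ℕ) := by
    refine sum_congr rfl fun v hv => ?_
    simp only [mem_erase] at hv
    rw [trans_apply, swap_apply_of_ne_of_ne (τ.injective.ne hv.1) (τ.injective.ne hv.2.1)]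
  unfold weight
  rw [split, split, rest]
  simp only [trans_apply, swap_apply_left, swap_apply_right]
  rw [show ((τ a : Fin n) : ℕ) = τ b + 1 from h]
  nlinarith [Fin.lt_def.1 hab]

lemma exists_mem_permsAvoiding_permOrientation_eq (G : SimpleGraph (Fin n)) (σ : Perm (Fin n)) :
    ∃ τ ∈ permsAvoiding (ltPairs Gᶜ), permOrientation G τ = permOrientation G σ := by
  classical
  obtain ⟨τ, hτ, hmax⟩ :=
    exists_max_image {τ | permOrientation G τ = permOrientation G σ} weight ⟨σ, by simp⟩
  rw [mem_filter] at hτ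
  refine ⟨τ, mem_permsAvoiding.2 fun ⟨a, b⟩ hp hf => ?_, hτ.2⟩
  obtain ⟨hab, hGab⟩ := mem_ltPairs.1 hp
  have hswap := permOrientation_trans_swap ((G.compl_adj a b).1 hGab).2 hf
  exact (weight_lt_weight_trans_swap hab hf).not_ge
    (hmax _ (mem_filter.2 ⟨mem_univ _, hswap.trans hτ.2⟩))

lemma compl_adj_and_follows_of_agree_below {H : SimpleGraph (Fin n)}
    (hmatch : ∀ v u w : Fin n, Hᶜ.Adj v u → Hᶜ.Adj v w → u = w) {σ τ : Perm (Fin n)}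
    (heq : permOrientation H σ = permOrientation H τ) {a b : Fin n} (hab : a ≠ b)
    (hpos : σ a = τ b) (hσ : ∀ x, σ x < σ a → τ x = σ x)
    (hτ : ∀ x, τ x < τ b → σ x = τ x) :
    Hᶜ.Adj a b ∧ Follows τ (a, b) := by
  have hagree (u v : Fin n) (huv : H.Adj u v) : σ u < σ v ↔ τ u < τ v := by
    simpa [permOrientation, huv] using congrFun₂ heq u v
  have hτab : τ b < τ a := lt_of_le_of_ne
    (le_of_not_gt fun h => h.ne ((hτ a h).symm.trans hpos)) (τ.injective.ne hab.symm)
  have hσab : σ a < σ b := lt_of_le_of_ne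
    (le_of_not_gt fun h => h.ne (hpos ▸ hσ b h).symm) (σ.injective.ne hab)
  have hHab : Hᶜ.Adj a b :=
    (H.compl_adj a b).2 ⟨hab, fun h => ((hagree a b h).1 hσab).asymm hτab⟩
  refine ⟨hHab, ?_⟩
  -- the vertex `x` right after `b` in `τ` must be `a`, by the matching condition at `a`
  obtain ⟨x, hx⟩ : ∃ x, (τ x : ℕ) = τ b + 1 :=
    ⟨τ.symm ⟨τ b + 1, by omega⟩, by simp⟩
  obtain rfl : x = a := by
    by_contra hxa
    have hxb : x ≠ b := by rintro rfl; omega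
    have hHax : H.Adj a x := by
      by_contra h
      exact hxb (hmatch a b x hHab ((H.compl_adj a x).2 ⟨Ne.symm hxa, h⟩)).symm
    have hτxa : τ x < τ a := lt_of_le_of_ne (by rw [Fin.le_def]; omega) (τ.injective.ne hxa)
    have hσxa := (hagree x a hHax.symm).2 hτxa
    have := hσ x hσxa
    rw [hpos, Fin.lt_def, ← this] at hσxa
    omega
  exact hx

lemma eq_of_permOrientation_eq {H : SimpleGraph (Fin n)}
    (hmatch : ∀ v u w : Fin n, Hᶜ.Adj v u → Hᶜ.Adj v w → u = w) {σ τ : Perm (Fin n)}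
    (hσ : σ ∈ permsAvoiding (ltPairs Hᶜ)) (hτ : τ ∈ permsAvoiding (ltPairs Hᶜ))
    (heq : permOrientation H σ = permOrientation H τ) : σ = τ := by
  by_contra hne
  have hdiff : ∃ j, σ.symm j ≠ τ.symm j := by
    by_contra! h
    exact hne (symm_bijective.injective (Equiv.ext h))
  obtain ⟨j, hj, hmin⟩ := wellFounded_lt.has_min _ hdiff
  have below {σ₁ τ₁ : Perm (Fin n)} (hmin : ∀ i, σ₁.symm i ≠ τ₁.symm i → ¬ i < j)
      (x : Fin n) (hx : σ₁ x < j) : τ₁ x = σ₁ x := by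
    by_contra h
    refine hmin (σ₁ x) ?_ hx
    rw [symm_apply_apply, ne_comm]
    exact fun h' => h (τ₁.symm_apply_eq.1 h').symm
  have hmin' : ∀ i, τ.symm i ≠ σ.symm i → ¬ i < j := fun i h => hmin i (Ne.symm h)
  obtain ⟨hHab, hτab⟩ := compl_adj_and_follows_of_agree_below hmatch heq hj (by simp)
    (by simpa using below hmin) (by simpa using below hmin')
  obtain ⟨-, hσba⟩ := compl_adj_and_follows_of_agree_below hmatch heq.symm (Ne.symm hj)
    (by simp) (by simpa using below hmin') (by simpa using below hmin)
  rcases lt_or_gt_of_ne hj with h | h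
  · exact mem_permsAvoiding.1 hτ _ (mem_ltPairs.2 ⟨h, hHab⟩) hτab
  · exact mem_permsAvoiding.1 hσ _ (mem_ltPairs.2 ⟨h, hHab.symm⟩) hσba

def toAcyclicOrientation (G : SimpleGraph (Fin n)) (σ : permsAvoiding (ltPairs Gᶜ)) :
    {o : Fin n → Fin n → Prop // IsOrientation G o ∧ IsAcyclicRel o} :=
  ⟨permOrientation G σ, isOrientation_permOrientation G σ, isAcyclicRel_permOrientation G σ⟩

lemma toAcyclicOrientation_surjective (G : SimpleGraph (Fin n)) :
    Function.Surjective (toAcyclicOrientation G) := by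
  rintro ⟨o, hG, ho⟩
  obtain ⟨σ, rfl⟩ := exists_permOrientation_eq hG ho
  obtain ⟨τ, hτ, h⟩ := exists_mem_permsAvoiding_permOrientation_eq G σ
  exact ⟨⟨τ, hτ⟩, Subtype.ext h⟩

lemma aoCount_le_card_permsAvoiding (G : SimpleGraph (Fin n)) :
    aoCount G ≤ #(permsAvoiding (ltPairs Gᶜ)) := by
  rw [aoCount, ← Nat.card_eq_finsetCard]
  exact Nat.card_le_card_of_surjective _ (toAcyclicOrientation_surjective G)

lemma aoCount_eq_card_permsAvoiding {H : SimpleGraph (Fin n)}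
    (hmatch : ∀ v u w : Fin n, Hᶜ.Adj v u → Hᶜ.Adj v w → u = w) :
    aoCount H = #(permsAvoiding (ltPairs Hᶜ)) := by
  rw [aoCount, ← Nat.card_eq_finsetCard]
  refine (Nat.card_eq_of_bijective _
    ⟨fun σ τ h => ?_, toAcyclicOrientation_surjective H⟩).symm
  exact Subtype.ext (eq_of_permOrientation_eq hmatch σ.2 τ.2 (congrArg Subtype.val h))

lemma card_ltPairs_compl_eq {G H : SimpleGraph (Fin n)} (h : G.edgeSet.ncard = H.edgeSet.ncard) :
    #(ltPairs Gᶜ) = #(ltPairs Hᶜ) := by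
  have hG := card_ltPairs_add_card_ltPairs_compl G
  have hH := card_ltPairs_add_card_ltPairs_compl H
  rw [card_ltPairs] at hG hH
  omega

lemma isPartialInj_ltPairs_compl {H : SimpleGraph (Fin n)}
    (hmatch : ∀ v u w : Fin n, Hᶜ.Adj v u → Hᶜ.Adj v w → u = w) :
    IsPartialInj (ltPairs Hᶜ) := by
  refine ⟨fun p hp q hq h => Prod.ext h ?_, fun p hp q hq h => Prod.ext ?_ h⟩
  · exact hmatch p.1 p.2 q.2 (mem_ltPairs.1 hp).2 (h ▸ (mem_ltPairs.1 hq).2)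
  · exact hmatch p.2 p.1 q.1 (mem_ltPairs.1 hp).2.symm (h ▸ (mem_ltPairs.1 hq).2.symm)

end AcyclicOrientation

theorem ao_maximizer_complement_matching_general (n m : ℕ)
    (G H : SimpleGraph (Fin n))
    (hG : G.edgeSet.ncard = m) (hH : H.edgeSet.ncard = m)
    (hmatch : ∀ v u w : Fin n, Hᶜ.Adj v u → Hᶜ.Adj v w → u = w) :
    aoCount G ≤ aoCount H := by
  open AcyclicOrientation in
  calc aoCount G ≤ #(permsAvoiding (ltPairs Gᶜ)) := aoCount_le_card_permsAvoiding G
    _ ≤ #(permsAvoiding (ltPairs Hᶜ)) :=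
      card_permsAvoiding_le (fun _ => fst_lt_snd_of_mem_ltPairs)
        (fun _ => fst_lt_snd_of_mem_ltPairs) (isPartialInj_ltPairs_compl hmatch)
        (card_ltPairs_compl_eq (hG.trans hH.symm))
    _ = aoCount H := (aoCount_eq_card_permsAvoiding hmatch).symm

/-- For `m ≥ C(n,2) - ⌊n/2⌋`, among all simple graphs on `n` vertices with `m`
edges, any graph whose complement is a matching maximizes the number of acyclic
orientations. -/
theorem ao_maximizer_complement_matching (n m : ℕ) (hn : 1 ≤ n)
    (hm : Nat.choose n 2 - n / 2 ≤ m)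
    (G H : SimpleGraph (Fin n))
    (hG : G.edgeSet.ncard = m) (hH : H.edgeSet.ncard = m)
    (hmatch : ∀ v u w : Fin n, Hᶜ.Adj v u → Hᶜ.Adj v w → u = w) :
    aoCount G ≤ aoCount H :=
  ao_maximizer_complement_matching_general n m G H hG hH hmatch
end
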